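/- arXiv:1205.0025 — 4 statements merged into one kernel-verified Lean document; each statement's English description precedes it below -/
import Mathlib

section
/- Let N ≅ ℤ^d be a lattice and 𝚺 = (Σ, {v_1,...,v_k}) a simplicial stacky fan in N. For any β ∈ N ⊗ ℂ and any sufficiently small real δ > 0, there is a triple one-to-one correspondence α ↔ α_δ ↔ c(α_δ) among the finite sets Bx(𝚺;β) ⊂ ℂ^k, Bx(𝚺; Re β + δ Im β) ⊂ ℝ^k and Box(𝚺; Re β + δ Im β) ⊂ N ⊗ ℝ, such that the support cones σ(α), σ(α_δ) and σ(c(α_δ)) coincide. -/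
namespace GKZpaper

/-- The real cone spanned by the vectors `v i`, `i ∈ I`. -/
def realCone {d k : ℕ} (v : Fin k → Fin d → ℤ) (I : Finset (Fin k)) : Set (Fin d → ℝ) :=
  {x | ∃ c : Fin k → ℝ, (∀ i, 0 ≤ c i) ∧ (∀ i, i ∉ I → c i = 0) ∧
    ∀ j, x j = ∑ i, c i * (v i j : ℝ)}

/-- A (combinatorial model of a) rational simplicial fan together with the marked
lattice vectors `v i`; cones are recorded by the index sets of their generators. -/
structure StackyFan (d k : ℕ) where
  v : Fin k → Fin d → ℤ
  cones : Finset (Finset (Fin k))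
  empty_mem : ∅ ∈ cones
  downClosed : ∀ I ∈ cones, ∀ J ⊆ I, J ∈ cones
  simplicial : ∀ I ∈ cones,
    LinearIndependent ℝ (fun i : I => (fun j => (v i j : ℝ) : Fin d → ℝ))
  inter : ∀ I ∈ cones, ∀ J ∈ cones, realCone v I ∩ realCone v J = realCone v (I ∩ J)

variable {d k : ℕ}

/-- Every `v i` generates a ray of the fan. -/
def HasAllRays (F : StackyFan d k) : Prop := ∀ i, {i} ∈ F.cones

/-- The support of the fan. -/
def support (F : StackyFan d k) : Set (Fin d → ℝ) := ⋃ I ∈ F.cones, realCone F.v I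

/-- Maximal cones. -/
def IsMaxCone (F : StackyFan d k) (I : Finset (Fin k)) : Prop :=
  I ∈ F.cones ∧ ∀ J ∈ F.cones, I ⊆ J → J = I

def intPt {d : ℕ} (n : Fin d → ℤ) : Fin d → ℝ := fun j => (n j : ℝ)

/-- `Bx(σ;β)` for a complex parameter `β`: tuples `α` with `∑ αᵢ vᵢ ∈ N + β`,
`0 ≤ Re αᵢ < 1`, supported on `I`. -/
def BxCone (F : StackyFan d k) (β : Fin d → ℂ) (I : Finset (Fin k)) : Set (Fin k → ℂ) :=
  {α | (∀ i, 0 ≤ (α i).re ∧ (α i).re < 1) ∧ (∀ i, i ∉ I → α i = 0) ∧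
    ∃ n : Fin d → ℤ, ∀ j, ∑ i, α i * (F.v i j : ℂ) = (n j : ℂ) + β j}

/-- `Bx(𝚺;β)`: the union over the maximal cones. -/
def Bx (F : StackyFan d k) (β : Fin d → ℂ) : Set (Fin k → ℂ) :=
  {α | ∃ I, IsMaxCone F I ∧ α ∈ BxCone F β I}

/-- Real version of `Bx(σ;γ)`. -/
def BxConeR (F : StackyFan d k) (γ : Fin d → ℝ) (I : Finset (Fin k)) : Set (Fin k → ℝ) :=
  {a | (∀ i, 0 ≤ a i ∧ a i < 1) ∧ (∀ i, i ∉ I → a i = 0) ∧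
    ∃ n : Fin d → ℤ, ∀ j, ∑ i, a i * (F.v i j : ℝ) = (n j : ℝ) + γ j}

def BxR (F : StackyFan d k) (γ : Fin d → ℝ) : Set (Fin k → ℝ) :=
  {a | ∃ I, IsMaxCone F I ∧ a ∈ BxConeR F γ I}

/-- `Box(σ;γ) ⊂ N ⊗ ℝ` for a real parameter `γ`. -/
def BoxCone (F : StackyFan d k) (γ : Fin d → ℝ) (I : Finset (Fin k)) : Set (Fin d → ℝ) :=
  {c | (∃ n : Fin d → ℤ, ∀ j, c j = (n j : ℝ) + γ j) ∧
    ∃ a ∈ BxConeR F γ I, ∀ j, c j = ∑ i, a i * (F.v i j : ℝ)}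

def Box (F : StackyFan d k) (γ : Fin d → ℝ) : Set (Fin d → ℝ) :=
  {c | ∃ I, IsMaxCone F I ∧ c ∈ BoxCone F γ I}

/-- `I` is the minimal cone of the fan containing the point `x`. -/
def IsMinConeAt (F : StackyFan d k) (x : Fin d → ℝ) (I : Finset (Fin k)) : Prop :=
  I ∈ F.cones ∧ x ∈ realCone F.v I ∧ ∀ J ∈ F.cones, x ∈ realCone F.v J → I ⊆ J

/-- `w ∈ ∑ αᵢ vᵢ + ∑_{i ∈ I} ℤ₊ vᵢ`. -/
def shiftMem (F : StackyFan d k) (I : Finset (Fin k)) (α : Fin k → ℂ) (w : Fin d → ℂ) : Prop :=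
  ∃ m : Fin k → ℕ, (∀ i, i ∉ I → m i = 0) ∧
    ∀ j, w j = ∑ i, (α i + (m i : ℂ)) * (F.v i j : ℂ)

/-- Indexing set for the basis `[n+β, α]` of the deformed module `ℤ[𝚺;β]` (Definition 2). -/
def DefBasis (F : StackyFan d k) (β : Fin d → ℂ) : Set ((Fin d → ℂ) × (Fin k → ℂ)) :=
  {p | (∃ n : Fin d → ℤ, ∀ j, p.1 j = (n j : ℂ) + β j) ∧
    ∃ I, IsMaxCone F I ∧ p.2 ∈ BxCone F β I ∧ shiftMem F I p.2 p.1}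

/-- The defining condition for `[n'] ⬝ [n+β,α] = [n'+n+β,α']` via the maximal cone `I`. -/
def ActRelVia (F : StackyFan d k) (β : Fin d → ℂ) (I : Finset (Fin k)) (n' : Fin d → ℤ)
    (p p' : (Fin d → ℂ) × (Fin k → ℂ)) : Prop :=
  IsMaxCone F I ∧ intPt n' ∈ realCone F.v I ∧
    p.2 ∈ BxCone F β I ∧ shiftMem F I p.2 p.1 ∧
    p'.2 ∈ BxCone F β I ∧ shiftMem F I p'.2 p'.1 ∧
    ∀ j, p'.1 j = (n' j : ℂ) + p.1 j

/-- `[n'] ⬝ [n+β,α] = [n'+n+β,α']` (the product is nonzero with value `p'`). -/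
def ActRel (F : StackyFan d k) (β : Fin d → ℂ) (n' : Fin d → ℤ)
    (p p' : (Fin d → ℂ) × (Fin k → ℂ)) : Prop :=
  ∃ I, ActRelVia F β I n' p p'

/-- `Re β + δ Im β`, as a real vector. -/
def reDeform (β : Fin d → ℂ) (δ : ℝ) : Fin d → ℝ := fun j => (β j).re + δ * (β j).im

/-- `Re β + δ Im β`, regarded inside `N ⊗ ℂ`. -/
def reDeformC (β : Fin d → ℂ) (δ : ℝ) : Fin d → ℂ := fun j => ((β j).re + δ * (β j).im : ℝ)

end GKZpaper

namespace GKZpaper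

variable {d k : ℕ}

/-- Uniqueness of representations supported on a cone of the fan. -/
lemma unique_rep (F : StackyFan d k) {I : Finset (Fin k)} (hI : I ∈ F.cones)
    {a c : Fin k → ℝ} (ha : ∀ i, i ∉ I → a i = 0) (hc : ∀ i, i ∉ I → c i = 0)
    (h : ∀ j, ∑ i, a i * (F.v i j : ℝ) = ∑ i, c i * (F.v i j : ℝ)) : a = c := by
  have hli := F.simplicial I hI
  rw [Fintype.linearIndependent_iff] at hli
  have key := hli (fun i => a i.1 - c i.1) ?_
  · funext i
    by_cases hi : i ∈ I
    · have := key ⟨i, hi⟩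
      simpa [sub_eq_zero] using this
    · rw [ha i hi, hc i hi]
  · funext j
    have h1 : (∑ i : {x // x ∈ I}, (a i.1 - c i.1) • (fun j => (F.v i.1 j : ℝ))) j
        = ∑ i : {x // x ∈ I}, (a i.1 - c i.1) * (F.v i.1 j : ℝ) := by
      rw [Finset.sum_apply]; simp [smul_eq_mul]
    rw [h1]
    have h2 : ∑ i : {x // x ∈ I}, (a i.1 - c i.1) * (F.v i.1 j : ℝ)
        = ∑ i ∈ I, (a i - c i) * (F.v i j : ℝ) :=
      Finset.sum_coe_sort I (fun i => (a i - c i) * (F.v i j : ℝ))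
    rw [h2]
    have h3 : ∑ i ∈ I, (a i - c i) * (F.v i j : ℝ)
        = ∑ i, (a i - c i) * (F.v i j : ℝ) := by
      apply Finset.sum_subset (Finset.subset_univ I)
      intro i _ hi
      rw [ha i hi, hc i hi]; ring
    rw [h3]
    have := h j
    simp only [sub_mul, Finset.sum_sub_distrib]
    rw [this]; ring_nf
    rfl

/-- Real/imaginary decomposition of the defining equation. -/
lemma eqn_iff (F : StackyFan d k) (β : Fin d → ℂ) (α : Fin k → ℂ) (n : Fin d → ℤ) (j : Fin d) :
    (∑ i, α i * (F.v i j : ℂ) = (n j : ℂ) + β j) ↔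
    ((∑ i, (α i).re * (F.v i j : ℝ) = (n j : ℝ) + (β j).re) ∧
     (∑ i, (α i).im * (F.v i j : ℝ) = (β j).im)) := by
  rw [Complex.ext_iff]
  constructor
  · rintro ⟨h1, h2⟩
    constructor
    · rw [Complex.re_sum] at h1
      simpa [Complex.mul_re] using h1
    · rw [Complex.im_sum] at h2
      simpa [Complex.mul_im] using h2
  · rintro ⟨h1, h2⟩
    constructor
    · rw [Complex.re_sum]; simpa [Complex.mul_re] using h1
    · rw [Complex.im_sum]; simpa [Complex.mul_im] using h2

/-- Linear span (with signs) of the `v i`, `i ∈ I`. -/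
def lin (F : StackyFan d k) (I : Finset (Fin k)) : Set (Fin d → ℝ) :=
  {x | ∃ c : Fin k → ℝ, (∀ i, i ∉ I → c i = 0) ∧ ∀ j, x j = ∑ i, c i * (F.v i j : ℝ)}

lemma lin_sub_div (F : StackyFan d k) {I : Finset (Fin k)} {x p q : Fin d → ℝ}
    (hp : p ∈ lin F I) (hq : q ∈ lin F I) {t : ℝ} (ht : t ≠ 0)
    (hx : ∀ j, t * x j = p j - q j) : x ∈ lin F I := by
  obtain ⟨c1, hc1, h1⟩ := hp
  obtain ⟨c2, hc2, h2⟩ := hq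
  refine ⟨fun i => (c1 i - c2 i) / t, fun i hi => by
    show (c1 i - c2 i) / t = 0
    rw [hc1 i hi, hc2 i hi]; simp, fun j => ?_⟩
  have hxj : x j = (p j - q j) / t := by
    field_simp
    linarith [hx j]
  rw [hxj, h1 j, h2 j, ← Finset.sum_sub_distrib, Finset.sum_div]
  exact Finset.sum_congr rfl fun i _ => by
    show (c1 i * (F.v i j : ℝ) - c2 i * (F.v i j : ℝ)) / t = (c1 i - c2 i) / t * (F.v i j : ℝ)
    rw [div_mul_eq_mul_div, sub_mul]

/-- `a ↦ ∑ aᵢ vᵢ` is a bijection of `BxR` onto `Box`. -/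
lemma bijOn_phi (F : StackyFan d k) (γ : Fin d → ℝ) :
    Set.BijOn (fun a : Fin k → ℝ => (fun j => ∑ i, a i * (F.v i j : ℝ) : Fin d → ℝ))
      (BxR F γ) (Box F γ) := by
  refine ⟨?_, ?_, ?_⟩
  · rintro a ⟨I, hImax, hb, hs, n, hn⟩
    exact ⟨I, hImax, ⟨n, fun j => hn j⟩, a, ⟨hb, hs, n, hn⟩, fun j => rfl⟩
  · rintro a ⟨I, hImax, hba, hsa, na, hna⟩ b ⟨J, hJmax, hbb, hsb, nb, hnb⟩ hab
    have hxI : (fun j => ∑ i, a i * (F.v i j : ℝ)) ∈ realCone F.v I :=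
      ⟨a, fun i => (hba i).1, hsa, fun j => rfl⟩
    have hfe : (fun j => ∑ i, a i * (F.v i j : ℝ)) = (fun j => ∑ i, b i * (F.v i j : ℝ)) :=
      funext fun j => congrFun hab j
    have hxJ : (fun j => ∑ i, a i * (F.v i j : ℝ)) ∈ realCone F.v J := by
      rw [hfe]; exact ⟨b, fun i => (hbb i).1, hsb, fun j => rfl⟩
    have hmem : (fun j => ∑ i, a i * (F.v i j : ℝ)) ∈ realCone F.v (I ∩ J) := by
      rw [← F.inter I hImax.1 J hJmax.1]; exact ⟨hxI, hxJ⟩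
    obtain ⟨c, _, hcs, hceq⟩ := hmem
    have hac : a = c := by
      refine unique_rep F hImax.1 hsa (fun i hi => hcs i (fun hmem' => hi (Finset.mem_of_mem_inter_left hmem'))) (fun j => ?_)
      exact hceq j
    have hbc : b = c := by
      refine unique_rep F hJmax.1 hsb (fun i hi => hcs i (fun hmem' => hi (Finset.mem_of_mem_inter_right hmem'))) (fun j => ?_)
      rw [← congrFun hfe j]
      exact hceq j
    rw [hac, hbc]
  · rintro c ⟨I, hImax, ⟨n, hcn⟩, a, ha, hca⟩
    exact ⟨a, ⟨I, hImax, ha⟩, (funext fun j => (hca j).symm)⟩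

/-- The support of `a` spans the minimal cone containing `∑ aᵢ vᵢ`. -/
lemma minConeAt (F : StackyFan d k) (γ : Fin d → ℝ) {a : Fin k → ℝ} {I : Finset (Fin k)}
    (ha : a ∈ BxR F γ) (hI : (I : Set (Fin k)) = {i | a i ≠ 0}) :
    IsMinConeAt F (fun j => ∑ i, a i * (F.v i j : ℝ)) I := by
  obtain ⟨J, hJmax, hb, hs, n, hn⟩ := ha
  have hmemI : ∀ i, a i ≠ 0 → i ∈ I := by
    intro i hi
    have : i ∈ ((I : Set (Fin k))) := by rw [hI]; exact hi
    exact this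
  have hnotI : ∀ i, i ∉ I → a i = 0 := by
    intro i hi
    by_contra h
    exact hi (hmemI i h)
  have hIJ : I ⊆ J := by
    intro i hi
    have hai : a i ≠ 0 := by
      have : i ∈ {i | a i ≠ 0} := by rw [← hI]; exact hi
      exact this
    by_contra hiJ
    exact hai (hs i hiJ)
  have hIc : I ∈ F.cones := F.downClosed J hJmax.1 I hIJ
  refine ⟨hIc, ⟨a, fun i => (hb i).1, hnotI, fun j => rfl⟩, ?_⟩
  intro J' hJ' hx
  have hmem : (fun j => ∑ i, a i * (F.v i j : ℝ)) ∈ realCone F.v (I ∩ J') := by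
    rw [← F.inter I hIc J' hJ']
    exact ⟨⟨a, fun i => (hb i).1, hnotI, fun j => rfl⟩, hx⟩
  obtain ⟨c, _, hcs, hceq⟩ := hmem
  have hac : a = c := by
    refine unique_rep F hJmax.1 hs (fun i hi => hcs i ?_) (fun j => hceq j)
    intro hmem'
    exact hi (hIJ (Finset.mem_of_mem_inter_left hmem'))
  intro i hi
  have hai : a i ≠ 0 := by
    have : i ∈ {i | a i ≠ 0} := by rw [← hI]; exact hi
    exact this
  rw [hac] at hai
  by_contra hiJ'
  exact hai (hcs i (fun hmem' => hiJ' (Finset.mem_of_mem_inter_right hmem')))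

/-- The fractional-part map sends `BxCone` into `BxConeR`. -/
lemma fract_mem (F : StackyFan d k) (β : Fin d → ℂ) (δ : ℝ) {I : Finset (Fin k)} {α : Fin k → ℂ}
    (hα : α ∈ BxCone F β I) :
    (fun i => Int.fract ((α i).re + δ * (α i).im)) ∈ BxConeR F (reDeform β δ) I := by
  obtain ⟨hb, hs, n, hn⟩ := hα
  refine ⟨fun i => ⟨Int.fract_nonneg _, Int.fract_lt_one _⟩, fun i hi => by
    show Int.fract ((α i).re + δ * (α i).im) = 0
    rw [hs i hi]; simp, ?_⟩
  refine ⟨fun j => n j - ∑ i, ⌊(α i).re + δ * (α i).im⌋ * F.v i j, fun j => ?_⟩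
  have hre := ((eqn_iff F β α n j).mp (hn j)).1
  have him := ((eqn_iff F β α n j).mp (hn j)).2
  have hterm : ∀ i : Fin k, Int.fract ((α i).re + δ * (α i).im) * (F.v i j : ℝ)
      = ((α i).re * (F.v i j : ℝ) + δ * ((α i).im * (F.v i j : ℝ)))
        - (⌊(α i).re + δ * (α i).im⌋ : ℝ) * (F.v i j : ℝ) := by
    intro i; rw [Int.fract]; ring
  rw [Finset.sum_congr rfl (fun i _ => hterm i), Finset.sum_sub_distrib,
    Finset.sum_add_distrib, ← Finset.mul_sum, hre, him]
  simp only [reDeform]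
  push_cast
  ring

/-- The coefficient giving the allowed perturbation size at one coordinate. -/
noncomputable def tcoef (z : ℂ) : ℝ :=
  (if z.re = 0 then 1 else min z.re (1 - z.re)) / (|z.im| + 1)

lemma tcoef_pos {z : ℂ} (h0 : 0 ≤ z.re) (h1 : z.re < 1) : 0 < tcoef z := by
  unfold tcoef
  apply div_pos
  · split_ifs with h
    · norm_num
    · exact lt_min (lt_of_le_of_ne h0 (Ne.symm h)) (by linarith)
  · positivity

/-- Key smallness lemma: supports are preserved. -/
lemma fract_ne_zero {z : ℂ} (h0 : 0 ≤ z.re) (h1 : z.re < 1) {δ : ℝ} (hδ0 : 0 < δ)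
    (hδ : δ < tcoef z) (hz : z ≠ 0) : Int.fract (z.re + δ * z.im) ≠ 0 := by
  have hd1 : (0:ℝ) < |z.im| + 1 := by positivity
  have hd : δ * (|z.im| + 1) < (if z.re = 0 then 1 else min z.re (1 - z.re)) := by
    rw [← lt_div_iff₀ hd1]; exact hδ
  have hds : δ * |z.im| < (if z.re = 0 then 1 else min z.re (1 - z.re)) := by nlinarith
  by_cases hr : z.re = 0
  · rw [if_pos hr] at hds
    have hs : z.im ≠ 0 := by
      intro h
      exact hz (Complex.ext hr h)
    intro h0'
    have hm : z.re + δ * z.im = (⌊z.re + δ * z.im⌋ : ℝ) := by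
      rw [Int.fract] at h0'; linarith
    have habs : |z.re + δ * z.im| < 1 := by
      rw [hr, zero_add, abs_mul, abs_of_nonneg hδ0.le]
      exact hds
    have hne : z.re + δ * z.im ≠ 0 := by
      rw [hr, zero_add]
      exact mul_ne_zero (ne_of_gt hδ0) hs
    have hm0 : ⌊z.re + δ * z.im⌋ ≠ 0 := by
      intro h
      rw [h] at hm
      exact hne (by simpa using hm)
    have : (1:ℝ) ≤ |(⌊z.re + δ * z.im⌋ : ℝ)| := by
      exact_mod_cast Int.one_le_abs hm0
    rw [← hm] at this
    linarith
  · rw [if_neg hr] at hds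
    have hrp : 0 < z.re := lt_of_le_of_ne h0 (Ne.symm hr)
    have h1' : δ * z.im < 1 - z.re := by
      calc δ * z.im ≤ δ * |z.im| := by nlinarith [le_abs_self z.im]
      _ < min z.re (1 - z.re) := hds
      _ ≤ 1 - z.re := min_le_right _ _
    have h0' : -z.re < δ * z.im := by
      have : δ * z.im ≥ -(δ * |z.im|) := by nlinarith [neg_abs_le z.im]
      have h2 : δ * |z.im| < z.re := lt_of_lt_of_le hds (min_le_left _ _)
      linarith
    have hx0 : 0 < z.re + δ * z.im := by linarith
    have hx1 : z.re + δ * z.im < 1 := by linarith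
    rw [Int.fract_eq_self.mpr ⟨hx0.le, hx1⟩]
    exact ne_of_gt hx0

/-- The global bound used to confine the lattice points. -/
noncomputable def Cbound (F : StackyFan d k) (β : Fin d → ℂ) : Fin d → ℝ :=
  fun j => (∑ i, |(F.v i j : ℝ)|) + |(β j).re| + |(β j).im|

def Sset (F : StackyFan d k) (β : Fin d → ℂ) : Set (Fin d → ℤ) :=
  {n | ∀ j, |(n j : ℝ)| ≤ Cbound F β j}

lemma Sset_finite (F : StackyFan d k) (β : Fin d → ℂ) : (Sset F β).Finite := by
  apply Set.Finite.subset (Set.Finite.pi (fun j => Set.finite_Icc (⌈-(Cbound F β j)⌉) ⌊Cbound F β j⌋))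
  intro n hn
  rw [Set.mem_univ_pi]
  intro j
  have := hn j
  rw [abs_le] at this
  exact ⟨Int.ceil_le.mpr (by linarith [this.1]), Int.le_floor.mpr this.2⟩

lemma sum_abs_bound (F : StackyFan d k) {a : Fin k → ℝ} (hb : ∀ i, 0 ≤ a i ∧ a i < 1) (j : Fin d) :
    |∑ i, a i * (F.v i j : ℝ)| ≤ ∑ i, |(F.v i j : ℝ)| := by
  calc |∑ i, a i * (F.v i j : ℝ)| ≤ ∑ i, |a i * (F.v i j : ℝ)| :=
        Finset.abs_sum_le_sum_abs _ _
  _ ≤ ∑ i, |(F.v i j : ℝ)| := by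
      apply Finset.sum_le_sum
      intro i _
      rw [abs_mul, abs_of_nonneg (hb i).1]
      nlinarith [abs_nonneg ((F.v i j : ℝ)), (hb i).1, (hb i).2]

lemma n_mem_S_real (F : StackyFan d k) (β : Fin d → ℂ) {δ : ℝ} (hδ0 : 0 ≤ δ) (hδ1 : δ ≤ 1)
    {a : Fin k → ℝ} {n : Fin d → ℤ} (hb : ∀ i, 0 ≤ a i ∧ a i < 1)
    (hn : ∀ j, ∑ i, a i * (F.v i j : ℝ) = (n j : ℝ) + reDeform β δ j) : n ∈ Sset F β := by
  intro j
  have h1 := sum_abs_bound F hb j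
  have h2 := hn j
  simp only [reDeform] at h2
  have h3 : |δ * (β j).im| ≤ |(β j).im| := by
    rw [abs_mul, abs_of_nonneg hδ0]
    nlinarith [abs_nonneg ((β j).im)]
  rw [abs_le] at h1 h3 ⊢
  unfold Cbound
  constructor
  · nlinarith [neg_abs_le ((β j).re), le_abs_self ((β j).re)]
  · nlinarith [neg_abs_le ((β j).re), le_abs_self ((β j).re)]

lemma n_mem_S_cx (F : StackyFan d k) (β : Fin d → ℂ) {α : Fin k → ℂ} {n : Fin d → ℤ}
    (hb : ∀ i, 0 ≤ (α i).re ∧ (α i).re < 1)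
    (hn : ∀ j, ∑ i, α i * (F.v i j : ℂ) = (n j : ℂ) + β j) : n ∈ Sset F β := by
  intro j
  have hre := ((eqn_iff F β α n j).mp (hn j)).1
  have h1 := sum_abs_bound F (a := fun i => (α i).re) hb j
  rw [abs_le] at h1 ⊢
  unfold Cbound
  constructor
  · nlinarith [neg_abs_le ((β j).re), le_abs_self ((β j).re), abs_nonneg ((β j).im)]
  · nlinarith [neg_abs_le ((β j).re), le_abs_self ((β j).re), abs_nonneg ((β j).im)]

lemma maxCones_finite (F : StackyFan d k) : {I | IsMaxCone F I}.Finite :=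
  Set.Finite.subset F.cones.finite_toSet (fun _ hI => hI.1)

/-- `Bx` is a finite set. -/
lemma bx_finite (F : StackyFan d k) (β : Fin d → ℂ) : (Bx F β).Finite := by
  apply Set.Finite.subset
    (Set.Finite.biUnion (maxCones_finite F) (fun I _ =>
      Set.Finite.biUnion (Sset_finite F β) (fun n _ =>
        Set.Subsingleton.finite (s := {α : Fin k → ℂ | α ∈ BxCone F β I ∧
          ∀ j, ∑ i, α i * (F.v i j : ℂ) = (n j : ℂ) + β j}) ?_)))
  · rintro α ⟨I, hImax, hb, hs, n, hn⟩
    refine Set.mem_biUnion hImax (Set.mem_biUnion (n_mem_S_cx F β hb hn) ?_)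
    exact ⟨⟨hb, hs, n, hn⟩, hn⟩
  · rintro x ⟨⟨hbx, hsx, -⟩, hx⟩ y ⟨⟨hby, hsy, -⟩, hy⟩
    have hIc : I ∈ F.cones := (‹I ∈ {I | IsMaxCone F I}› : IsMaxCone F I).1
    have hre : (fun i => (x i).re) = (fun i => (y i).re) := by
      apply unique_rep F hIc (fun i hi => by show (x i).re = 0; rw [hsx i hi]; simp)
        (fun i hi => by show (y i).re = 0; rw [hsy i hi]; simp)
      intro j
      rw [((eqn_iff F β x n j).mp (hx j)).1, ((eqn_iff F β y n j).mp (hy j)).1]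
    have him : (fun i => (x i).im) = (fun i => (y i).im) := by
      apply unique_rep F hIc (fun i hi => by show (x i).im = 0; rw [hsx i hi]; simp)
        (fun i hi => by show (y i).im = 0; rw [hsy i hi]; simp)
      intro j
      rw [((eqn_iff F β x n j).mp (hx j)).2, ((eqn_iff F β y n j).mp (hy j)).2]
    funext i
    exact Complex.ext (congrFun hre i) (congrFun him i)

/-- The set of "bad" deformation parameters. -/
def badSet (F : StackyFan d k) (β : Fin d → ℂ) : Set ℝ :=
  {δ | 0 < δ ∧ ∃ I, IsMaxCone F I ∧ ∃ n ∈ Sset F β,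
    (fun j => (β j).im) ∉ lin F I ∧
    (fun j => (n j : ℝ) + (β j).re + δ * (β j).im) ∈ lin F I}

lemma badSet_finite (F : StackyFan d k) (β : Fin d → ℂ) : (badSet F β).Finite := by
  apply Set.Finite.subset
    (Set.Finite.biUnion (maxCones_finite F) (fun I _ =>
      Set.Finite.biUnion (Sset_finite F β) (fun n _ =>
        Set.Subsingleton.finite (s := {δ : ℝ | (fun j => (β j).im) ∉ lin F I ∧
          (fun j => (n j : ℝ) + (β j).re + δ * (β j).im) ∈ lin F I}) ?_)))
  · rintro δ ⟨hδ0, I, hImax, n, hnS, hnl, hl⟩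
    exact Set.mem_biUnion hImax (Set.mem_biUnion hnS ⟨hnl, hl⟩)
  · rintro δ1 ⟨hnl, hl1⟩ δ2 ⟨_, hl2⟩
    by_contra hne
    apply hnl
    refine lin_sub_div F hl1 hl2 (t := δ1 - δ2) (sub_ne_zero.mpr hne) (fun j => ?_)
    ring

/-- The set of positive thresholds. -/
def Tset (F : StackyFan d k) (β : Fin d → ℂ) : Set ℝ :=
  (fun p : (Fin k → ℂ) × Fin k => tcoef (p.1 p.2)) '' ((Bx F β) ×ˢ (Set.univ : Set (Fin k)))

lemma Tset_finite (F : StackyFan d k) (β : Fin d → ℂ) : (Tset F β).Finite :=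
  Set.Finite.image _ ((bx_finite F β).prod Set.finite_univ)

lemma Tset_pos (F : StackyFan d k) (β : Fin d → ℂ) {t : ℝ} (ht : t ∈ Tset F β) : 0 < t := by
  obtain ⟨⟨α, i⟩, ⟨hα, -⟩, rfl⟩ := ht
  obtain ⟨I, _, hb, _⟩ := hα
  exact tcoef_pos (hb i).1 (hb i).2

lemma badSet_pos (F : StackyFan d k) (β : Fin d → ℂ) {t : ℝ} (ht : t ∈ badSet F β) : 0 < t := ht.1



lemma imβ_mem_lin (F : StackyFan d k) (β : Fin d → ℂ) {δ : ℝ} (hδ0 : 0 < δ) (hδ1 : δ ≤ 1)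
    (hbad : δ ∉ badSet F β) {I : Finset (Fin k)} {a : Fin k → ℝ}
    (hImax : IsMaxCone F I) (ha : a ∈ BxConeR F (reDeform β δ) I) :
    (fun j => (β j).im) ∈ lin F I := by
  obtain ⟨hb, hs, n, hn⟩ := ha
  by_contra h
  apply hbad
  refine ⟨hδ0, I, hImax, n, n_mem_S_real F β hδ0.le hδ1 hb hn, h, a, hs, fun j => ?_⟩
  show (n j : ℝ) + (β j).re + δ * (β j).im = ∑ i, a i * (F.v i j : ℝ)
  have := hn j
  simp only [reDeform] at this
  linarith

/-- **Corollary 2.6.** For any `β ∈ N ⊗ ℂ` and all sufficiently small `δ > 0` there is a triple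
one-to-one correspondence `α ↔ α_δ ↔ c(α_δ)` among `Bx(𝚺;β) ⊂ ℂᵏ`,
`Bx(𝚺;Re β + δ Im β) ⊂ ℝᵏ` and `Box(𝚺;Re β + δ Im β) ⊂ N ⊗ ℝ`, matching the support cones:
the supports of `α` and `α_δ` agree, the map `a ↦ ∑ aᵢ vᵢ` is a bijection of
`Bx(𝚺;β_δ)` onto `Box(𝚺;β_δ)`, and the minimal cone of `Σ` containing `c(α_δ)` is the cone
spanned by `{vᵢ : (α_δ)ᵢ ≠ 0}`. -/
theorem statement1 {d k : ℕ} (F : StackyFan d k) (hrays : HasAllRays F) (β : Fin d → ℂ) :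
    ∃ δ₀ : ℝ, 0 < δ₀ ∧ ∀ δ : ℝ, 0 < δ → δ < δ₀ →
      ∃ e : ↥(Bx F β) ≃ ↥(BxR F (reDeform β δ)),
        (∀ a : ↥(Bx F β),
          {i | (a : Fin k → ℂ) i ≠ 0} = {i | (e a : Fin k → ℝ) i ≠ 0}) ∧
        Set.BijOn (fun a : Fin k → ℝ => (fun j => ∑ i, a i * (F.v i j : ℝ) : Fin d → ℝ))
          (BxR F (reDeform β δ)) (Box F (reDeform β δ)) ∧
        (∀ a : ↥(BxR F (reDeform β δ)), ∀ I : Finset (Fin k),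
          (I : Set (Fin k)) = {i | (a : Fin k → ℝ) i ≠ 0} →
          IsMinConeAt F (fun j => ∑ i, (a : Fin k → ℝ) i * (F.v i j : ℝ)) I) := by
  classical
  have hTfin : (Tset F β ∪ badSet F β).Finite := (Tset_finite F β).union (badSet_finite F β)
  have hTpos : ∀ t ∈ Tset F β ∪ badSet F β, 0 < t := by
    rintro t (ht | ht)
    exacts [Tset_pos F β ht, ht.1]
  have hTfne : (insert (1:ℝ) hTfin.toFinset).Nonempty := ⟨1, Finset.mem_insert_self _ _⟩
  refine ⟨(insert (1:ℝ) hTfin.toFinset).min' hTfne, ?_, ?_⟩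
  · have := (insert (1:ℝ) hTfin.toFinset).min'_mem hTfne
    rcases Finset.mem_insert.mp this with h | h
    · rw [h]; norm_num
    · exact hTpos _ (hTfin.mem_toFinset.mp h)
  intro δ hδ0 hδlt
  have hδle : ∀ t ∈ Tset F β ∪ badSet F β, δ < t := fun t ht =>
    lt_of_lt_of_le hδlt ((insert (1:ℝ) hTfin.toFinset).min'_le t
      (Finset.mem_insert_of_mem (hTfin.mem_toFinset.mpr ht)))
  have hδ1 : δ ≤ 1 := le_of_lt (lt_of_lt_of_le hδlt
    ((insert (1:ℝ) hTfin.toFinset).min'_le 1 (Finset.mem_insert_self _ _)))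
  have hbad : δ ∉ badSet F β := fun h => lt_irrefl δ (hδle δ (Or.inr h))
  have hG1 : ∀ α ∈ Bx F β, ∀ i, α i ≠ 0 → Int.fract ((α i).re + δ * (α i).im) ≠ 0 := by
    intro α hα i hi
    obtain ⟨I, hImax, hb, hs, nn, hn⟩ := id hα
    exact fract_ne_zero (hb i).1 (hb i).2 hδ0
      (hδle (tcoef (α i)) (Or.inl ⟨(α, i), ⟨hα, Set.mem_univ i⟩, rfl⟩)) hi
  have hfmem : ∀ α : ↥(Bx F β),
      (fun i => Int.fract (((α : Fin k → ℂ) i).re + δ * ((α : Fin k → ℂ) i).im))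
        ∈ BxR F (reDeform β δ) := by
    intro α
    obtain ⟨I, hImax, hmem⟩ := α.2
    exact ⟨I, hImax, fract_mem F β δ hmem⟩
  let f : ↥(Bx F β) → ↥(BxR F (reDeform β δ)) := fun α => ⟨_, hfmem α⟩
  have hinj : Function.Injective f := by
    intro x y hxy
    have hab : ∀ i, Int.fract ((x.1 i).re + δ * (x.1 i).im)
        = Int.fract ((y.1 i).re + δ * (y.1 i).im) :=
      fun i => congrFun (congrArg Subtype.val hxy) i
    have hxBx := x.2
    have hyBx := y.2
    obtain ⟨I, hImax, hbx, hsx, nx, hnx⟩ := id x.2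
    obtain ⟨J, hJmax, hby, hsy, ny, hny⟩ := id y.2
    have hyI : ∀ i, i ∉ I → y.1 i = 0 := by
      intro i hi
      by_contra h
      have h1 : Int.fract ((y.1 i).re + δ * (y.1 i).im) ≠ 0 := hG1 _ hyBx i h
      have h2 : x.1 i ≠ 0 := by
        intro h0
        apply h1
        rw [← hab i, h0]
        simp
      exact h2 (hsx i hi)
    have him : (fun i => (x.1 i).im) = (fun i => (y.1 i).im) := by
      apply unique_rep F hImax.1 (fun i hi => by show (x.1 i).im = 0; rw [hsx i hi]; simp)
        (fun i hi => by show (y.1 i).im = 0; rw [hyI i hi]; simp)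
      intro j
      rw [((eqn_iff F β x.1 nx j).mp (hnx j)).2, ((eqn_iff F β y.1 ny j).mp (hny j)).2]
    have hrex : ∀ (z : Fin k → ℂ), (∀ i, 0 ≤ (z i).re ∧ (z i).re < 1) → ∀ i : Fin k,
        (z i).re = Int.fract (Int.fract ((z i).re + δ * (z i).im) - δ * (z i).im) := by
      intro z hbz i
      have h1 : Int.fract ((z i).re + δ * (z i).im) - δ * (z i).im
          = (z i).re - (⌊(z i).re + δ * (z i).im⌋ : ℝ) := by rw [Int.fract]; ring
      rw [h1, Int.fract_sub_intCast, Int.fract_eq_self.mpr ⟨(hbz i).1, (hbz i).2⟩]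
    apply Subtype.ext
    funext i
    refine Complex.ext ?_ (congrFun him i)
    rw [hrex x.1 hbx i, hrex y.1 hby i, hab i, congrFun him i]
  have hsurj : Function.Surjective f := by
    intro b
    have hbBx := b.2
    obtain ⟨I, hImax, hbb, hsb, n, hn⟩ := id b.2
    obtain ⟨s, hs0, hseq⟩ :=
      imβ_mem_lin F β hδ0 hδ1 hbad hImax ⟨hbb, hsb, n, hn⟩
    set α : Fin k → ℂ := fun i => ⟨Int.fract (b.1 i - δ * s i), s i⟩ with hαdef
    have hmem : α ∈ BxCone F β I := by
      refine ⟨fun i => ⟨Int.fract_nonneg _, Int.fract_lt_one _⟩, fun i hi => ?_, ?_⟩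
      · show (⟨Int.fract (b.1 i - δ * s i), s i⟩ : ℂ) = 0
        rw [hsb i hi, hs0 i hi]
        apply Complex.ext <;> simp
      · refine ⟨fun j => n j - ∑ i, ⌊b.1 i - δ * s i⌋ * F.v i j, fun j => ?_⟩
        show ∑ i, α i * (F.v i j : ℂ)
            = ((n j - ∑ i, ⌊b.1 i - δ * s i⌋ * F.v i j : ℤ) : ℂ) + β j
        refine (eqn_iff F β α (fun j => n j - ∑ i, ⌊b.1 i - δ * s i⌋ * F.v i j) j).mpr ⟨?_, ?_⟩
        · have hterm : ∀ i : Fin k, (α i).re * (F.v i j : ℝ)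
              = (b.1 i * (F.v i j : ℝ) - δ * (s i * (F.v i j : ℝ)))
                - (⌊b.1 i - δ * s i⌋ : ℝ) * (F.v i j : ℝ) := by
            intro i
            show Int.fract (b.1 i - δ * s i) * (F.v i j : ℝ)
              = (b.1 i * (F.v i j : ℝ) - δ * (s i * (F.v i j : ℝ)))
                - (⌊b.1 i - δ * s i⌋ : ℝ) * (F.v i j : ℝ)
            rw [Int.fract]; ring
          rw [Finset.sum_congr rfl (fun i _ => hterm i), Finset.sum_sub_distrib,
            Finset.sum_sub_distrib, ← Finset.mul_sum]
          have h1 := hn j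
          simp only [reDeform] at h1
          have h2 : (β j).im = ∑ i, s i * (F.v i j : ℝ) := hseq j
          rw [h1, ← h2]
          push_cast
          ring
        · show ∑ i, (α i).im * (F.v i j : ℝ) = (β j).im
          have h2 : (β j).im = ∑ i, s i * (F.v i j : ℝ) := hseq j
          rw [h2]
    refine ⟨⟨α, I, hImax, hmem⟩, ?_⟩
    apply Subtype.ext
    funext i
    show Int.fract ((α i).re + δ * (α i).im) = b.1 i
    show Int.fract (Int.fract (b.1 i - δ * s i) + δ * s i) = b.1 i
    have h1 : Int.fract (b.1 i - δ * s i) + δ * s i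
        = b.1 i - (⌊b.1 i - δ * s i⌋ : ℝ) := by rw [Int.fract]; ring
    rw [h1, Int.fract_sub_intCast, Int.fract_eq_self.mpr ⟨(hbb i).1, (hbb i).2⟩]
  refine ⟨Equiv.ofBijective f ⟨hinj, hsurj⟩, ?_, bijOn_phi F (reDeform β δ), ?_⟩
  · intro a
    ext i
    simp only [Set.mem_setOf_eq]
    constructor
    · intro h
      exact hG1 a.1 a.2 i h
    · intro h h0
      apply h
      show Int.fract ((a.1 i).re + δ * (a.1 i).im) = 0
      rw [h0]
      simp
  · intro a I hI
    exact minConeAt F (reDeform β δ) a.2 hI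


end GKZpaper
end

section
/- Let N ≅ ℤ^d be a lattice, 𝚺 = (Σ, {v_1,...,v_k}) a simplicial stacky fan in N, and β ∈ N ⊗ ℂ. The product on the R-module ℤ[𝚺;β] is well defined: if [n']·[n+β,α] is computed via two different maximal cones σ satisfying the defining membership conditions, the resulting element [n'+n+β, α'] is the same; in particular the tuple α' is independent of the choice of maximal cone. -/
namespace GKZpaper


/-- Coefficients of a linear combination over a cone's generators are unique. -/
lemma coeff_unique {d k : ℕ} (F : StackyFan d k) {I : Finset (Fin k)} (hI : I ∈ F.cones)
    (a b : Fin k → ℝ) (ha : ∀ i ∉ I, a i = 0) (hb : ∀ i ∉ I, b i = 0)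
    (h : ∀ j, ∑ i, a i * (F.v i j : ℝ) = ∑ i, b i * (F.v i j : ℝ)) : a = b := by
  have hli := F.simplicial I hI
  rw [Fintype.linearIndependent_iff] at hli
  have key := hli (fun i => a i - b i) ?_
  · funext i
    by_cases hiI : i ∈ I
    · have := key ⟨i, hiI⟩
      have : a i - b i = 0 := this
      linarith
    · rw [ha i hiI, hb i hiI]
  · funext j
    have h1 : (∑ i : I, (a i - b i) • (fun j => (F.v i j : ℝ))) j
        = ∑ i : I, (a i - b i) * (F.v i j : ℝ) := by
      simp [Finset.sum_apply]
    have h2 : ∑ i : I, (a (i : Fin k) - b i) * (F.v i j : ℝ)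
        = ∑ i ∈ I, (a i - b i) * (F.v i j : ℝ) := by
      exact Finset.sum_coe_sort I (fun i => (a i - b i) * (F.v i j : ℝ))
    have h3 : ∑ i ∈ I, (a i - b i) * (F.v i j : ℝ)
        = ∑ i, (a i - b i) * (F.v i j : ℝ) := by
      apply Finset.sum_subset (Finset.subset_univ I)
      intro i _ hiI
      rw [ha i hiI, hb i hiI]; ring
    have h4 : ∑ i, (a i - b i) * (F.v i j : ℝ) = 0 := by
      have := h j
      rw [Finset.sum_congr rfl (fun i _ => sub_mul (a i) (b i) ((F.v i j : ℝ))),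
        Finset.sum_sub_distrib]
      linarith
    calc (∑ i : I, (a i - b i) • (fun j => (F.v i j : ℝ))) j = 0 := by
          rw [h1, h2, h3, h4]
      _ = (0 : Fin d → ℝ) j := rfl

lemma frac_unique {r r' : ℝ} {m m' : ℕ} (hr : 0 ≤ r) (hr1 : r < 1) (hr' : 0 ≤ r')
    (hr1' : r' < 1) (h : r + m = r' + m') : r = r' := by
  have h1 : ((m' - (m : ℤ) : ℤ) : ℝ) = r - r' := by push_cast; linarith
  have h2 : |((m' - (m : ℤ) : ℤ) : ℝ)| < 1 := by
    rw [h1, abs_sub_lt_iff]; constructor <;> linarith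
  have h3 : |(m' - (m : ℤ) : ℤ)| < 1 := by exact_mod_cast h2
  have h4 : (m' - (m : ℤ) : ℤ) = 0 := by rwa [Int.abs_lt_one_iff] at h3
  have : ((m' - (m : ℤ) : ℤ) : ℝ) = 0 := by exact_mod_cast h4
  rw [h1] at this; linarith

/-- Well-definedness of the product on `ℤ[𝚺;β]`: if the product `[n'] ⬝ [n+β,α]` can be
computed via two maximal cones, yielding results `[n'+n+β,α'₁]` and `[n'+n+β,α'₂]`, then the
results agree; in particular `α'` does not depend on the chosen maximal cone. -/
theorem statement3 {d k : ℕ} (F : StackyFan d k) (hrays : HasAllRays F) (β : Fin d → ℂ)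
    (n' : Fin d → ℤ) (p q₁ q₂ : (Fin d → ℂ) × (Fin k → ℂ)) (I₁ I₂ : Finset (Fin k))
    (h₁ : ActRelVia F β I₁ n' p q₁) (h₂ : ActRelVia F β I₂ n' p q₂) :
    q₁ = q₂ := by
  obtain ⟨hmax₁, hn₁, hp₁, hsp₁, hq₁, hsq₁, heq₁⟩ := h₁
  obtain ⟨hmax₂, hn₂, hp₂, hsp₂, hq₂, hsq₂, heq₂⟩ := h₂
  have hI₁ : I₁ ∈ F.cones := hmax₁.1
  have hI₂ : I₂ ∈ F.cones := hmax₂.1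
  -- first components agree
  have hfst : q₁.1 = q₂.1 := by funext j; rw [heq₁ j, heq₂ j]
  -- imaginary part of a complex combination
  have im_sum : ∀ (α : Fin k → ℂ) (j : Fin d),
      (∑ i, α i * (F.v i j : ℂ)).im = ∑ i, (α i).im * (F.v i j : ℝ) := by
    intro α j
    rw [Complex.im_sum]
    refine Finset.sum_congr rfl fun i _ => ?_
    simp [Complex.mul_im]
  have re_sum : ∀ (α : Fin k → ℂ) (m : Fin k → ℕ) (j : Fin d),
      (∑ i, (α i + (m i : ℂ)) * (F.v i j : ℂ)).re
        = ∑ i, ((α i).re + (m i : ℝ)) * (F.v i j : ℝ) := by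
    intro α m j
    rw [Complex.re_sum]
    refine Finset.sum_congr rfl fun i _ => ?_
    simp [Complex.mul_re, Complex.add_re, Complex.add_im]
  -- imaginary parts of α', via comparison with p.2
  have imeq : ∀ (I : Finset (Fin k)), I ∈ F.cones →
      ∀ (α' : Fin k → ℂ), α' ∈ BxCone F β I → p.2 ∈ BxCone F β I →
      (fun i => (α' i).im) = fun i => (p.2 i).im := by
    intro I hI α' hα' hp
    obtain ⟨-, hsupp', n₁, hn₁'⟩ := hα'
    obtain ⟨-, hsupp, n₀, hn₀⟩ := hp
    refine coeff_unique F hI _ _ (fun i hi => by rw [hsupp' i hi]; rfl)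
      (fun i hi => by rw [hsupp i hi]; rfl) fun j => ?_
    rw [← im_sum, ← im_sum, hn₁' j, hn₀ j]
    simp
  have him : ∀ i, (q₁.2 i).im = (q₂.2 i).im := by
    intro i
    have e₁ := congrFun (imeq I₁ hI₁ q₁.2 hq₁ hp₁) i
    have e₂ := congrFun (imeq I₂ hI₂ q₂.2 hq₂ hp₂) i
    rw [e₁, e₂]
  -- real parts
  obtain ⟨m₁, hm₁0, hm₁⟩ := hsq₁
  obtain ⟨m₂, hm₂0, hm₂⟩ := hsq₂
  set a₁ : Fin k → ℝ := fun i => (q₁.2 i).re + (m₁ i : ℝ) with ha₁def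
  set a₂ : Fin k → ℝ := fun i => (q₂.2 i).re + (m₂ i : ℝ) with ha₂def
  have hbx₁ := hq₁.1
  have hbx₂ := hq₂.1
  have hsupp₁ := hq₁.2.1
  have hsupp₂ := hq₂.2.1
  have ha₁supp : ∀ i ∉ I₁, a₁ i = 0 := by
    intro i hi; simp [ha₁def, hsupp₁ i hi, hm₁0 i hi]
  have ha₂supp : ∀ i ∉ I₂, a₂ i = 0 := by
    intro i hi; simp [ha₂def, hsupp₂ i hi, hm₂0 i hi]
  have ha₁pos : ∀ i, 0 ≤ a₁ i := fun i => by
    have := (hbx₁ i).1; positivity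
  have ha₂pos : ∀ i, 0 ≤ a₂ i := fun i => by
    have := (hbx₂ i).1; positivity
  set x : Fin d → ℝ := fun j => (q₁.1 j).re with hxdef
  have hx₁ : ∀ j, x j = ∑ i, a₁ i * (F.v i j : ℝ) := by
    intro j; rw [hxdef]; simp only
    rw [hm₁ j, re_sum]
  have hx₂ : ∀ j, x j = ∑ i, a₂ i * (F.v i j : ℝ) := by
    intro j; rw [hxdef]; simp only
    rw [hfst, hm₂ j, re_sum]
  have hxmem : x ∈ realCone F.v I₁ ∩ realCone F.v I₂ :=
    ⟨⟨a₁, ha₁pos, ha₁supp, hx₁⟩, ⟨a₂, ha₂pos, ha₂supp, hx₂⟩⟩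
  rw [F.inter I₁ hI₁ I₂ hI₂] at hxmem
  obtain ⟨c, hcpos, hcsupp, hc⟩ := hxmem
  have hc₁ : ∀ i ∉ I₁, c i = 0 := fun i hi =>
    hcsupp i (fun hmem => hi (Finset.mem_of_mem_inter_left hmem))
  have hc₂ : ∀ i ∉ I₂, c i = 0 := fun i hi =>
    hcsupp i (fun hmem => hi (Finset.mem_of_mem_inter_right hmem))
  have he₁ : a₁ = c := coeff_unique F hI₁ a₁ c ha₁supp hc₁
    (fun j => by rw [← hx₁ j, hc j])
  have he₂ : a₂ = c := coeff_unique F hI₂ a₂ c ha₂supp hc₂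
    (fun j => by rw [← hx₂ j, hc j])
  have hre : ∀ i, (q₁.2 i).re = (q₂.2 i).re := by
    intro i
    have : a₁ i = a₂ i := by rw [he₁, he₂]
    exact frac_unique (hbx₁ i).1 (hbx₁ i).2 (hbx₂ i).1 (hbx₂ i).2 this
  have hsnd : q₁.2 = q₂.2 := by
    funext i; exact Complex.ext (hre i) (him i)
  exact Prod.ext hfst hsnd


end GKZpaper
end

section
/- Let N ≅ ℤ^d be a lattice, 𝚺 = (Σ, {v_1,...,v_k}) a simplicial stacky fan in N, β ∈ N ⊗ ℂ, and S_𝚺 the subring of R = ℤ[𝚺] generated by the elements [v_i]. Then there is a direct sum decomposition of the R-module ℤ[𝚺;β] into S_𝚺-submodules: ℤ[𝚺;β] = ⊕_{α ∈ Bx(𝚺;β)} S_𝚺 · [Σ_{i=1}^k α_i v_i, α]. -/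
namespace GKZpaper

/-- The point `∑ αᵢ vᵢ` of `N ⊗ ℂ` attached to `α ∈ Bx(𝚺;β)`. -/
noncomputable def bxPoint {d k : ℕ} (F : StackyFan d k) (α : Fin k → ℂ) : Fin d → ℂ :=
  fun j => ∑ i, α i * (F.v i j : ℂ)
/-- Coefficients of a point of the cone `I` with respect to the linearly independent
generators `vᵢ`, `i ∈ I`, are unique (real version). -/
lemma coneCoeff_unique {d k : ℕ} (F : StackyFan d k) {I : Finset (Fin k)} (hI : I ∈ F.cones)
    {a b : Fin k → ℝ} (ha : ∀ i, i ∉ I → a i = 0) (hb : ∀ i, i ∉ I → b i = 0)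
    (h : ∀ j, ∑ i, a i * (F.v i j : ℝ) = ∑ i, b i * (F.v i j : ℝ)) : a = b := by
  have hli := F.simplicial I hI
  rw [Fintype.linearIndependent_iff] at hli
  have key := hli (fun i : I => a i - b i) ?_
  · funext i
    by_cases hi : i ∈ I
    · have h0 : a (⟨i, hi⟩ : I) - b (⟨i, hi⟩ : I) = 0 := key ⟨i, hi⟩
      simp only at h0
      linarith
    · rw [ha i hi, hb i hi]
  · funext j
    simp only [Finset.sum_apply, Pi.smul_apply, smul_eq_mul, Pi.zero_apply]
    calc ∑ i : I, (a i - b i) * (F.v i j : ℝ)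
        = ∑ i ∈ I, (a i - b i) * (F.v i j : ℝ) := Finset.sum_coe_sort I (fun i => (a i - b i) * (F.v i j : ℝ))
      _ = ∑ i, (a i - b i) * (F.v i j : ℝ) :=
          Finset.sum_subset (Finset.subset_univ I)
            (fun i _ hi => by rw [ha i hi, hb i hi]; ring)
      _ = 0 := by
          simp only [sub_mul, Finset.sum_sub_distrib, h j, sub_self]

/-- Complex version of `coneCoeff_unique`. -/
lemma coneCoeffC_unique {d k : ℕ} (F : StackyFan d k) {I : Finset (Fin k)} (hI : I ∈ F.cones)
    {a b : Fin k → ℂ} (ha : ∀ i, i ∉ I → a i = 0) (hb : ∀ i, i ∉ I → b i = 0)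
    (h : ∀ j, ∑ i, a i * (F.v i j : ℂ) = ∑ i, b i * (F.v i j : ℂ)) : a = b := by
  have hre : (fun i => (a i).re) = fun i => (b i).re := by
    refine coneCoeff_unique F hI (fun i hi => by rw [ha i hi]; simp)
      (fun i hi => by rw [hb i hi]; simp) (fun j => ?_)
    have := congrArg Complex.re (h j)
    simpa [Complex.re_sum, Complex.mul_re] using this
  have him : (fun i => (a i).im) = fun i => (b i).im := by
    refine coneCoeff_unique F hI (fun i hi => by rw [ha i hi]; simp)
      (fun i hi => by rw [hb i hi]; simp) (fun j => ?_)
    have := congrArg Complex.im (h j)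
    simpa [Complex.im_sum, Complex.mul_im] using this
  funext i
  exact Complex.ext (congrFun hre i) (congrFun him i)
/-- **Decomposition (2.2).**  `ℤ[𝚺;β] = ⊕_{α ∈ Bx(𝚺;β)} S_𝚺 ⬝ [∑ αᵢ vᵢ, α]` as
`S_𝚺`-submodules, where `S_𝚺 ⊂ R` is the subring generated by the `[vᵢ]`.  Combinatorially:
each `[∑ αᵢ vᵢ, α]`, `α ∈ Bx(𝚺;β)`, is a basis element of `ℤ[𝚺;β]`, and every basis element
of `ℤ[𝚺;β]` is obtained from exactly one of them by acting with a (nonzero) monomial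
`∏ [vᵢ]^{mᵢ} = [∑ mᵢ vᵢ]` (`mᵢ ∈ ℕ`, supported on a cone) of `S_𝚺`. -/
theorem statement5 {d k : ℕ} (F : StackyFan d k) (hrays : HasAllRays F) (β : Fin d → ℂ) :
    (∀ α ∈ Bx F β, (bxPoint F α, α) ∈ DefBasis F β) ∧
    ∀ p ∈ DefBasis F β, ∃! α : Fin k → ℂ, α ∈ Bx F β ∧
      ∃ (n' : Fin d → ℤ) (m : Fin k → ℕ),
        (∃ I ∈ F.cones, ∀ i, i ∉ I → m i = 0) ∧
        (∀ j, n' j = ∑ i, (m i : ℤ) * F.v i j) ∧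
        ActRel F β n' (bxPoint F α, α) p := by
  constructor
  · rintro α ⟨I, hImax, hBx⟩
    obtain ⟨hbd, hsupp, n, hn⟩ := hBx
    exact ⟨⟨n, fun j => hn j⟩, I, hImax, ⟨hbd, hsupp, n, hn⟩,
      0, fun i _ => rfl, fun j => by simp [bxPoint]⟩
  · rintro p ⟨⟨n, hn⟩, I, hImax, hBx, m, hm0, hmw⟩
    refine ⟨p.2, ⟨⟨I, hImax, hBx⟩, fun j => ∑ i, (m i : ℤ) * F.v i j, m,
      ⟨I, hImax.1, hm0⟩, fun _ => rfl, I, hImax, ?_, hBx,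
      ⟨0, fun i _ => rfl, fun j => by simp [bxPoint]⟩, hBx, ⟨m, hm0, hmw⟩, fun j => ?_⟩, ?_⟩
    · -- intPt n' ∈ realCone F.v I
      refine ⟨fun i => (m i : ℝ), fun i => by positivity,
        fun i hi => by show ((m i : ℝ)) = 0; rw [hm0 i hi]; simp, fun j => ?_⟩
      simp only [intPt]
      push_cast
      rfl
    · -- p.1 j = n' j + bxPoint F p.2 j
      rw [hmw j]
      have hc : ((∑ i, (m i : ℤ) * F.v i j : ℤ) : ℂ) = ∑ i, (m i : ℂ) * (F.v i j : ℂ) := by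
        push_cast; rfl
      rw [hc]
      simp only [bxPoint, add_mul, Finset.sum_add_distrib]
      exact add_comm _ _
    · -- uniqueness
      rintro α₁ ⟨-, n', m', ⟨J, hJ, hm'J⟩, hn'form,
        I₁, hI₁max, hn'cone, hα₁Bx, -, hpBx, ⟨mm, hmm0, hmmw⟩, hadd⟩
      -- n' lies in realCone J via m'
      have hJmem : intPt n' ∈ realCone F.v J := by
        refine ⟨fun i => (m' i : ℝ), fun i => by positivity,
          fun i hi => by show ((m' i : ℝ)) = 0; rw [hm'J i hi]; simp, fun j => ?_⟩
        simp only [intPt, hn'form j]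
        push_cast
        rfl
      have hboth : intPt n' ∈ realCone F.v (I₁ ∩ J) := by
        rw [← F.inter I₁ hI₁max.1 J hJ]
        exact ⟨hn'cone, hJmem⟩
      obtain ⟨c'', hc''0, hc''s, hc''r⟩ := hboth
      -- m' agrees with c'' (coefficients w.r.t. cone J)
      have hm'c : (fun i => (m' i : ℝ)) = c'' := by
        refine coneCoeff_unique F hJ (fun i hi => by show ((m' i : ℝ)) = 0; rw [hm'J i hi]; simp)
          (fun i hi => hc''s i (fun hmem => hi (Finset.mem_of_mem_inter_right hmem)))
          (fun j => ?_)
        rw [← hc''r j]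
        simp only [intPt, hn'form j]
        push_cast
        rfl
      -- hence m' is supported on I₁
      have hm'I₁ : ∀ i, i ∉ I₁ → m' i = 0 := by
        intro i hi
        have : (m' i : ℝ) = c'' i := congrFun hm'c i
        rw [hc''s i (fun hmem => hi (Finset.mem_of_mem_inter_left hmem))] at this
        exact_mod_cast this
      -- the coefficients of n' w.r.t. I₁ from hn'cone agree with m'
      obtain ⟨c, hc0, hcs, hcr⟩ := hn'cone
      have hcm' : c = fun i => (m' i : ℝ) := by
        refine coneCoeff_unique F hI₁max.1 hcs
          (fun i hi => by show ((m' i : ℝ)) = 0; rw [hm'I₁ i hi]; simp) (fun j => ?_)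
        rw [← hcr j]
        simp only [intPt, hn'form j]
        push_cast
        rfl
      -- complex coefficient comparison on I₁
      have hAB : (fun i => α₁ i + (m' i : ℂ)) = fun i => p.2 i + (mm i : ℂ) := by
        refine coneCoeffC_unique F hI₁max.1
          (fun i hi => by
            have h0 : α₁ i = 0 := hα₁Bx.2.1 i hi
            rw [h0, hm'I₁ i hi]; simp)
          (fun i hi => by rw [hpBx.2.1 i hi, hmm0 i hi]; simp) (fun j => ?_)
        have h1 : ∑ i, (p.2 i + (mm i : ℂ)) * (F.v i j : ℂ) = p.1 j := (hmmw j).symm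
        have h2 : ((n' j : ℂ)) = ∑ i, (m' i : ℂ) * (F.v i j : ℂ) := by
          rw [hn'form j]; push_cast; rfl
        rw [h1, hadd j, h2]
        simp only [bxPoint, add_mul, Finset.sum_add_distrib]
        exact add_comm _ _
      funext i
      have hABi : α₁ i + (m' i : ℂ) = p.2 i + (mm i : ℂ) := congrFun hAB i
      have hre : (α₁ i).re + (m' i : ℝ) = (p.2 i).re + (mm i : ℝ) := by
        have := congrArg Complex.re hABi
        simpa using this
      have hb1 := (hα₁Bx.1 i).1
      have hb2 := (hα₁Bx.1 i).2
      have hb3 := (hpBx.1 i).1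
      have hb4 := (hpBx.1 i).2
      have hx1 : (((m' i : ℤ) - (mm i : ℤ) : ℤ) : ℝ) < 1 := by push_cast; linarith
      have hx2 : (-1 : ℝ) < (((m' i : ℤ) - (mm i : ℤ) : ℤ) : ℝ) := by push_cast; linarith
      have hx : ((m' i : ℤ) - (mm i : ℤ) : ℤ) = 0 := by
        have h1' : ((m' i : ℤ) - (mm i : ℤ) : ℤ) < 1 := by exact_mod_cast hx1
        have h2' : (-1 : ℤ) < ((m' i : ℤ) - (mm i : ℤ) : ℤ) := by exact_mod_cast hx2
        omega
      have hmm' : (m' i : ℂ) = (mm i : ℂ) := by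
        have : (m' i : ℤ) = (mm i : ℤ) := by omega
        exact_mod_cast this
      rw [hmm'] at hABi
      exact add_right_cancel hABi

end GKZpaper
end

section
/- In the setting of the Γ-series construction for the better behaved GKZ system: for any c(α_δ) ∈ Box(𝚺;β_δ), v ∈ K ∩ N, l ∈ L(α,v), and x ∈ ℂ^k, the product Π_{i=1}^k (x_i^{l_i+D_i}/Γ(l_i+D_i+1)) · [c(α_δ)] belongs to the shadow R-submodule ℂ[𝚺;β_δ]_{Re β} ⊂ ℂ[𝚺;β_δ]. -/
namespace GKZpaper

variable {d k : ℕ}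

/-- The cone `K ⊂ N ⊗ ℝ` over `Δ = conv(𝒜)`: the nonnegative span of the `vᵢ`. -/
def Kcone (v : Fin k → Fin d → ℤ) : Set (Fin d → ℝ) :=
  {x | ∃ c : Fin k → ℝ, (∀ i, 0 ≤ c i) ∧ ∀ j, x j = ∑ i, c i * (v i j : ℝ)}

/-- `I(𝚺)`: the indices `i` such that `vᵢ` generates a ray of the fan. -/
def raysIdx (F : StackyFan d k) : Set (Fin k) := {i | {i} ∈ F.cones}

/-- The lattice points of `K`. -/
def latticeK (v : Fin k → Fin d → ℤ) : Set (Fin d → ℤ) := {n | intPt n ∈ Kcone v}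

/-- The setting of §4: `𝒜 = {v₁,…,v_k}` generates `N` as a group, `deg(vᵢ) = 1` for a
homomorphism `deg : N → ℤ`, and `Σ` is a fan coming from a regular triangulation of
`Δ = conv 𝒜`, with support `K` and rays among the `vᵢ`. -/
structure GKZSetting (d k : ℕ) where
  F : StackyFan d k
  deg : (Fin d → ℤ) →ₗ[ℤ] ℤ
  hdeg : ∀ i, deg (F.v i) = 1
  hgen : Submodule.span ℤ (Set.range F.v) = ⊤
  hsupp : support F = Kcone F.v
  /-- regularity of the triangulation: a convex piecewise linear support function,
  linear exactly on the maximal cones. -/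
  hreg : ∃ η : (Fin d → ℝ) → ℝ, ConvexOn ℝ (Kcone F.v) η ∧
    ∀ I, IsMaxCone F I → ∃ L : (Fin d → ℝ) →ₗ[ℝ] ℝ,
      (∀ x ∈ realCone F.v I, η x = L x) ∧
      ∀ x ∈ Kcone F.v, x ∉ realCone F.v I → L x < η x

/-- The set `L(α,v)` of Definition 4.3: tuples `l` with `∑ lᵢ vᵢ = β - v` and
`lᵢ - αᵢ ∈ ℤ` for all `i`. -/
def Lset (v : Fin k → Fin d → ℤ) (β : Fin d → ℂ) (α : Fin k → ℂ) (w : Fin d → ℤ) :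
    Set (Fin k → ℂ) :=
  {l | (∀ j, ∑ i, l i * (v i j : ℂ) = β j - (w j : ℂ)) ∧ ∀ i, ∃ z : ℤ, l i - α i = (z : ℂ)}

/-- The generating points of the shadow module `ℂ[𝚺;χ]_ξ`: the points `w = n + χ` of `K`
with `w + εξ ∈ K` for all sufficiently small `ε > 0`. -/
def ShadowPts (F : StackyFan d k) (χ ξ : Fin d → ℝ) : Set (Fin d → ℝ) :=
  {w | (∃ n : Fin d → ℤ, ∀ j, w j = (n j : ℝ) + χ j) ∧ w ∈ Kcone F.v ∧
    ∃ ε₀ : ℝ, 0 < ε₀ ∧ ∀ ε : ℝ, 0 < ε → ε ≤ ε₀ →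
      (fun j => w j + ε * ξ j) ∈ Kcone F.v}

/-- `Re β`. -/
def rePt (β : Fin d → ℂ) : Fin d → ℝ := fun j => (β j).re

end GKZpaper

namespace GKZpaper

/-- **Lemma 4.4 i).** Each term of the `Γ`-series: every basis element
`[w] = [c(α_δ) + ∑ mᵢ vᵢ]` occurring in the product
`∏ᵢ (xᵢ^{lᵢ+Dᵢ}/Γ(lᵢ+Dᵢ+1)) ⬝ [c(α_δ)]` (so `m` is supported on `I(𝚺)`, `mᵢ ≥ 1` whenever
`lᵢ` is a negative integer — in which case `i ∈ I(𝚺)` — and the two factors lie in a common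
maximal cone) belongs to the shadow submodule `ℂ[𝚺;β_δ]_{Re β} ⊆ ℂ[𝚺;β_δ]`. -/
theorem statement14 {d k : ℕ} (S : GKZSetting d k) (β : Fin d → ℂ)
    (δ : ℝ) (hδ : 0 < δ)
    (α : Fin k → ℂ) (hα : α ∈ Bx S.F β)
    (αδ : Fin k → ℝ) (hαδ : ∀ i, αδ i = Int.fract ((α i).re + δ * (α i).im))
    (hδsmall : ∀ i, αδ i = 0 ↔ α i = 0)
    (c : Fin d → ℝ) (hcdef : ∀ j, c j = ∑ i, αδ i * (S.F.v i j : ℝ))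
    (hc : c ∈ Box S.F (reDeform β δ))
    (w : Fin d → ℤ) (hw : w ∈ latticeK S.F.v)
    (l : Fin k → ℂ) (hl : l ∈ Lset S.F.v β α w)
    (m : Fin k → ℕ)
    (hm0 : ∀ i, i ∉ raysIdx S.F → m i = 0)
    (hneg : ∀ i, (∃ z : ℤ, z < 0 ∧ l i = (z : ℂ)) → 1 ≤ m i)
    (hnegray : ∀ i, (∃ z : ℤ, z < 0 ∧ l i = (z : ℂ)) → i ∈ raysIdx S.F)
    (hnz : ∃ I, IsMaxCone S.F I ∧ c ∈ realCone S.F.v I ∧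
      (fun j => ∑ i, (m i : ℝ) * (S.F.v i j : ℝ)) ∈ realCone S.F.v I) :
    (fun j => c j + ∑ i, (m i : ℝ) * (S.F.v i j : ℝ)) ∈
      ShadowPts S.F (reDeform β δ) (rePt β) := by
  classical
  obtain ⟨hlsum, hlint⟩ := hl
  obtain ⟨cw, hcw0, hcwj⟩ := hw
  have hαδ0 : ∀ i, 0 ≤ αδ i := fun i => by rw [hαδ i]; exact Int.fract_nonneg _
  -- key positivity: if Re lᵢ < 0 then αδᵢ + mᵢ > 0
  have key : ∀ i, (l i).re < 0 → 0 < αδ i + (m i : ℝ) := by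
    intro i hi
    rcases Nat.eq_zero_or_pos (m i) with hm | hm
    · rcases eq_or_lt_of_le (hαδ0 i) with h0 | h0
      · exfalso
        have hai : α i = 0 := (hδsmall i).1 h0.symm
        obtain ⟨z, hz⟩ := hlint i
        have hlz : l i = (z : ℂ) := by rwa [hai, sub_zero] at hz
        have hzneg : z < 0 := by
          have : ((z : ℂ)).re < 0 := hlz ▸ hi
          exact_mod_cast this
        have := hneg i ⟨z, hzneg, hlz⟩
        omega
      · have : (0:ℝ) ≤ (m i : ℝ) := Nat.cast_nonneg _
        linarith
    · have h1 : (1:ℝ) ≤ (m i : ℝ) := by exact_mod_cast hm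
      have := hαδ0 i
      linarith
  set f : Fin k → ℝ := fun i => if (l i).re < 0 then (αδ i + (m i : ℝ)) / (-(l i).re) else 1
    with hf
  have hfpos : ∀ i, 0 < f i := by
    intro i
    by_cases hi : (l i).re < 0
    · simp only [hf, if_pos hi]
      exact div_pos (key i hi) (by linarith)
    · simp only [hf, if_neg hi]; norm_num
  set s : Finset ℝ := insert 1 (Finset.image f Finset.univ) with hsdef
  have hs : s.Nonempty := ⟨1, Finset.mem_insert_self _ _⟩
  set ε₀ := s.min' hs with hε₀def
  have hε₀pos : 0 < ε₀ := by
    have hmem := s.min'_mem hs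
    rcases Finset.mem_insert.mp hmem with h | h
    · have h1 : ε₀ = 1 := hε₀def.trans h
      rw [h1]; norm_num
    · obtain ⟨i, _, hfi⟩ := Finset.mem_image.mp h
      have h1 : ε₀ = f i := hε₀def.trans hfi.symm
      rw [h1]; exact hfpos i
  have hε₀le : ∀ i, ε₀ ≤ f i := fun i =>
    Finset.min'_le _ _ (Finset.mem_insert_of_mem (Finset.mem_image_of_mem f (Finset.mem_univ i)))
  have hcoef : ∀ ε : ℝ, 0 < ε → ε ≤ ε₀ → ∀ i, 0 ≤ αδ i + (m i : ℝ) + ε * (l i).re := by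
    intro ε hε hεle i
    by_cases hi : (l i).re < 0
    · have hfi : f i = (αδ i + (m i : ℝ)) / (-(l i).re) := if_pos hi
      have h2 : ε ≤ (αδ i + (m i : ℝ)) / (-(l i).re) := hfi ▸ le_trans hεle (hε₀le i)
      have h3 : ε * (-(l i).re) ≤ αδ i + (m i : ℝ) :=
        (le_div_iff₀ (by linarith)).mp h2
      linarith
    · push_neg at hi
      have := hαδ0 i
      have h4 : (0:ℝ) ≤ (m i : ℝ) := Nat.cast_nonneg _
      nlinarith
  -- real part of the l-relation
  have hre : ∀ j, (β j).re = (w j : ℝ) + ∑ i, (l i).re * (S.F.v i j : ℝ) := by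
    intro j
    have h := congrArg Complex.re (hlsum j)
    have h1 : (∑ i, l i * ((S.F.v i j : ℤ) : ℂ)).re = ∑ i, (l i).re * (S.F.v i j : ℝ) := by
      rw [Complex.re_sum]
      refine Finset.sum_congr rfl fun i _ => ?_
      simp [Complex.mul_re]
    rw [h1] at h
    have h2 : (β j - ((w j : ℤ) : ℂ)).re = (β j).re - (w j : ℝ) := by simp
    rw [h2] at h
    linarith
  refine ⟨?_, ?_, ?_⟩
  · -- lattice shift condition
    obtain ⟨I, hI, ⟨⟨n, hn⟩, _⟩⟩ := hc
    refine ⟨fun j => n j + ∑ i, (m i : ℤ) * S.F.v i j, fun j => ?_⟩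
    have := hn j
    push_cast
    rw [this]
    ring
  · -- membership in K
    refine ⟨fun i => αδ i + (m i : ℝ),
      fun i => add_nonneg (hαδ0 i) (Nat.cast_nonneg _), fun j => ?_⟩
    show c j + (∑ i, (m i : ℝ) * (S.F.v i j : ℝ))
        = ∑ i, (αδ i + (m i : ℝ)) * (S.F.v i j : ℝ)
    rw [hcdef j, ← Finset.sum_add_distrib]
    refine Finset.sum_congr rfl fun i _ => ?_
    ring
  · refine ⟨ε₀, hε₀pos, fun ε hε hεle => ?_⟩
    refine ⟨fun i => αδ i + (m i : ℝ) + ε * ((l i).re + cw i), fun i => ?_, fun j => ?_⟩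
    · have h1 := hcoef ε hε hεle i
      have h2 : 0 ≤ ε * cw i := mul_nonneg hε.le (hcw0 i)
      have h3 : ε * ((l i).re + cw i) = ε * (l i).re + ε * cw i := mul_add _ _ _
      show 0 ≤ αδ i + (m i : ℝ) + ε * ((l i).re + cw i)
      rw [h3]; linarith
    · have hwj : (w j : ℝ) = ∑ i, cw i * (S.F.v i j : ℝ) := hcwj j
      show (c j + ∑ i, (m i : ℝ) * (S.F.v i j : ℝ)) + ε * rePt β j
          = ∑ i, (αδ i + (m i : ℝ) + ε * ((l i).re + cw i)) * (S.F.v i j : ℝ)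
      have hrp : rePt β j = (β j).re := rfl
      have hsplit : ∑ i, (αδ i + (m i : ℝ) + ε * ((l i).re + cw i)) * (S.F.v i j : ℝ)
          = ∑ i, (αδ i * (S.F.v i j : ℝ) + (m i : ℝ) * (S.F.v i j : ℝ)
              + (ε * ((l i).re * (S.F.v i j : ℝ)) + ε * (cw i * (S.F.v i j : ℝ)))) :=
        Finset.sum_congr rfl fun i _ => by ring
      rw [hcdef j, hrp, hre j, hwj, hsplit, Finset.sum_add_distrib, Finset.sum_add_distrib,
        Finset.sum_add_distrib, ← Finset.mul_sum, ← Finset.mul_sum]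
      ring


end GKZpaper
end
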